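/- For N > 2s with s ∈ (0,1), the map α ↦ γ_α := 2^{2s} · Γ((N+2s+2α)/4)Γ((N+2s-2α)/4) / (Γ((N-2s-2α)/4)Γ((N-2s+2α)/4)) is strictly decreasing on the interval [0, (N-2s)/2). -/

import Mathlib

/-!
Writing `F_c(x) = Γ(c + x) Γ(c - x)`, the Gauss limit `Γ = lim GammaSeq` gives the Euler-type product
`Γ(c)² / F_c(x) = ∏_{i ≥ 0} (1 - x² / (c + i)²)` for `|x| < c`. With `a = (N + 2s)/4 > b = (N - 2s)/4`
one has `γ_α = 2^{2s} F_a(α/2) / F_b(α/2)`, and for `0 ≤ x < y < b` each factor of the product for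
`F_a(y) F_b(x) / (F_a(x) F_b(y))` is `< 1`, because `(y² - x²)(1/(b+i)² - 1/(a+i)²) > 0`.
-/

open Real Filter Finset Topology

theorem lt_of_tendsto_prod_range {u v : ℕ → ℝ} {U V : ℝ} (hu : ∀ i, 0 < u i)
    (huv : ∀ i, u i ≤ v i) (h0 : u 0 < v 0)
    (hU : Tendsto (fun n ↦ ∏ i ∈ range n, u i) atTop (𝓝 U))
    (hV : Tendsto (fun n ↦ ∏ i ∈ range n, v i) atTop (𝓝 V)) (hV₀ : 0 < V) : U < V := by
  have hv₀ : 0 < v 0 := (hu 0).trans h0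
  -- splitting off the first factor keeps the strict gap `u 0 / v 0 < 1` in the limit
  have hbound : ∀ n, ∏ i ∈ range (n + 1), u i ≤ u 0 / v 0 * ∏ i ∈ range (n + 1), v i := by
    intro n
    rw [prod_range_succ', prod_range_succ', div_mul_eq_mul_div, le_div_iff₀ hv₀]
    have := prod_le_prod (fun i _ ↦ (hu (i + 1)).le) (fun i _ ↦ huv (i + 1)) (s := range n)
    nlinarith [mul_le_mul_of_nonneg_left this (mul_pos (hu 0) hv₀).le]
  calc U ≤ u 0 / v 0 * V :=
        le_of_tendsto_of_tendsto ((tendsto_add_atTop_iff_nat 1).2 hU)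
          ((tendsto_add_atTop_iff_nat 1).2 (hV.const_mul _)) (Eventually.of_forall hbound)
    _ < 1 * V := mul_lt_mul_of_pos_right ((div_lt_one hv₀).2 h0) hV₀
    _ = V := one_mul V

theorem one_sub_sq_div_sq_mul_lt {x y A B : ℝ} (hxy : x ^ 2 < y ^ 2) (hB : 0 < B) (hBA : B < A) :
    (1 - y ^ 2 / B ^ 2) * (1 - x ^ 2 / A ^ 2) < (1 - x ^ 2 / B ^ 2) * (1 - y ^ 2 / A ^ 2) := by
  have hAB : 1 / A ^ 2 < 1 / B ^ 2 := one_div_lt_one_div_of_lt (by positivity) (by gcongr)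
  have key : (1 - x ^ 2 / B ^ 2) * (1 - y ^ 2 / A ^ 2) - (1 - y ^ 2 / B ^ 2) * (1 - x ^ 2 / A ^ 2)
      = (y ^ 2 - x ^ 2) * (1 / B ^ 2 - 1 / A ^ 2) := by ring
  nlinarith [mul_pos (sub_pos.2 hxy) (sub_pos.2 hAB)]

namespace Real

theorem GammaSeq_sq_div_GammaSeq_mul_GammaSeq {c x : ℝ} (hx : |x| < c) {n : ℕ} (hn : n ≠ 0) :
    GammaSeq c n ^ 2 / (GammaSeq (c + x) n * GammaSeq (c - x) n) =
      ∏ i ∈ range (n + 1), (1 - x ^ 2 / (c + i) ^ 2) := by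
  obtain ⟨hxc₁, hxc₂⟩ := abs_lt.1 hx
  have hc : 0 < c := by linarith
  have hn₀ : (0 : ℝ) < n := by positivity
  have hterm : ∀ i : ℕ, 1 - x ^ 2 / (c + i) ^ 2 = (c + x + i) * (c - x + i) / (c + i) ^ 2 := by
    intro i
    have : c + i ≠ 0 := (add_pos_of_pos_of_nonneg hc i.cast_nonneg).ne'
    field_simp
    ring
  have hpow : (n : ℝ) ^ (c + x) * (n : ℝ) ^ (c - x) = ((n : ℝ) ^ c) ^ 2 := by
    rw [← rpow_add hn₀, ← rpow_natCast, ← rpow_mul hn₀.le]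
    ring_nf
  have hprod : ∀ d : ℝ, 0 < d → ∏ i ∈ range (n + 1), (d + (i : ℝ)) ≠ 0 := fun d hd ↦
    prod_ne_zero_iff.2 fun i _ ↦ (add_pos_of_pos_of_nonneg hd i.cast_nonneg).ne'
  have h₁ := hprod c hc
  have h₂ := hprod (c + x) (by linarith)
  have h₃ := hprod (c - x) (by linarith)
  have h₄ : (n.factorial : ℝ) ≠ 0 := Nat.cast_ne_zero.2 n.factorial_ne_zero
  have h₅ : (n : ℝ) ^ c ≠ 0 := (rpow_pos_of_pos hn₀ c).ne'
  simp only [hterm, prod_div_distrib, prod_mul_distrib, prod_pow, GammaSeq]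
  field_simp
  rw [← hpow]

theorem tendsto_prod_one_sub_sq_div_sq {c x : ℝ} (hx : |x| < c) :
    Tendsto (fun n : ℕ ↦ ∏ i ∈ range n, (1 - x ^ 2 / (c + i) ^ 2)) atTop
      (𝓝 (Gamma c ^ 2 / (Gamma (c + x) * Gamma (c - x)))) := by
  obtain ⟨hxc₁, hxc₂⟩ := abs_lt.1 hx
  have hΓ : Gamma (c + x) * Gamma (c - x) ≠ 0 :=
    (mul_pos (Gamma_pos_of_pos (by linarith)) (Gamma_pos_of_pos (by linarith))).ne'
  rw [← tendsto_add_atTop_iff_nat 1]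
  refine (((GammaSeq_tendsto_Gamma c).pow 2).div ((GammaSeq_tendsto_Gamma _).mul
    (GammaSeq_tendsto_Gamma _)) hΓ).congr' (eventually_atTop.2 ⟨1, fun n hn ↦ ?_⟩)
  exact GammaSeq_sq_div_GammaSeq_mul_GammaSeq hx (Nat.one_le_iff_ne_zero.1 hn)

theorem Gamma_mul_Gamma_div_strictAntiOn {a b : ℝ} (hba : b < a) :
    StrictAntiOn (fun x ↦ Gamma (a + x) * Gamma (a - x) / (Gamma (b + x) * Gamma (b - x)))
      (Set.Ico 0 b) := by
  rintro x ⟨hx₀, hxb⟩ y ⟨hy₀, hyb⟩ hxy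
  have hb : 0 < b := hx₀.trans_lt hxb
  have hxa : x < a := hxb.trans hba
  have hya : y < a := hyb.trans hba
  have hF : ∀ {c t : ℝ}, 0 ≤ t → t < c → 0 < Gamma (c + t) * Gamma (c - t) := fun ht htc ↦
    mul_pos (Gamma_pos_of_pos (by linarith)) (Gamma_pos_of_pos (by linarith))
  have hK : 0 < Gamma b ^ 2 * Gamma a ^ 2 := by
    have := Gamma_pos_of_pos hb
    have := Gamma_pos_of_pos (hb.trans hba)
    positivity
  have hfactor : ∀ {t c : ℝ}, 0 ≤ t → t < c → 0 < 1 - t ^ 2 / c ^ 2 := fun ht htc ↦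
    sub_pos.2 ((div_lt_one (by nlinarith)).2 (by nlinarith))
  have habs : ∀ {t c : ℝ}, 0 ≤ t → t < c → |t| < c := fun ht htc ↦ abs_lt.2 ⟨by linarith, htc⟩
  have hU := (tendsto_prod_one_sub_sq_div_sq (habs hy₀ hyb)).mul
    (tendsto_prod_one_sub_sq_div_sq (habs hx₀ hxa))
  have hV := (tendsto_prod_one_sub_sq_div_sq (habs hx₀ hxb)).mul
    (tendsto_prod_one_sub_sq_div_sq (habs hy₀ hya))
  simp only [← prod_mul_distrib] at hU hV
  have hlt := lt_of_tendsto_prod_range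
    (fun i ↦ mul_pos (hfactor hy₀ (by linarith [i.cast_nonneg (α := ℝ)]))
      (hfactor hx₀ (by linarith [i.cast_nonneg (α := ℝ)])))
    (fun i ↦ (one_sub_sq_div_sq_mul_lt (by nlinarith) (by positivity) (by linarith)).le)
    (one_sub_sq_div_sq_mul_lt (by nlinarith) (by positivity) (by linarith)) hU hV
    (by rw [div_mul_div_comm]; exact div_pos hK (mul_pos (hF hx₀ hxb) (hF hy₀ hya)))
  rw [div_mul_div_comm, div_mul_div_comm, div_lt_div_iff_of_pos_left hK
    (mul_pos (hF hy₀ hyb) (hF hx₀ hxa)) (mul_pos (hF hx₀ hxb) (hF hy₀ hya))] at hlt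
  change _ / _ < _ / _
  rw [div_lt_div_iff₀ (hF hy₀ hyb) (hF hx₀ hxb)]
  linarith

end Real

theorem gamma_alpha_strictAntiOn_general (s N : ℝ) (hs : s ∈ Set.Ioo (0:ℝ) 1) :
    StrictAntiOn (fun α : ℝ =>
      2 ^ (2 * s) *
        (Real.Gamma ((N + 2 * s + 2 * α) / 4) * Real.Gamma ((N + 2 * s - 2 * α) / 4)) /
        (Real.Gamma ((N - 2 * s - 2 * α) / 4) * Real.Gamma ((N - 2 * s + 2 * α) / 4)))
      (Set.Ico (0:ℝ) ((N - 2 * s) / 2)) := by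
  rintro α ⟨hα₀, hα⟩ β ⟨hβ₀, hβ⟩ hαβ
  have hdec := Gamma_mul_Gamma_div_strictAntiOn (a := (N + 2 * s) / 4) (b := (N - 2 * s) / 4)
    (by linarith [hs.1]) ⟨by linarith, by linarith⟩ ⟨by linarith, by linarith⟩
    (by linarith : α / 2 < β / 2)
  have hγ : ∀ t : ℝ, 2 ^ (2 * s) *
      (Gamma ((N + 2 * s + 2 * t) / 4) * Gamma ((N + 2 * s - 2 * t) / 4)) /
      (Gamma ((N - 2 * s - 2 * t) / 4) * Gamma ((N - 2 * s + 2 * t) / 4)) =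
      2 ^ (2 * s) * (Gamma ((N + 2 * s) / 4 + t / 2) * Gamma ((N + 2 * s) / 4 - t / 2) /
        (Gamma ((N - 2 * s) / 4 + t / 2) * Gamma ((N - 2 * s) / 4 - t / 2))) := fun t ↦ by
    rw [mul_div_assoc, mul_comm (Gamma ((N - 2 * s - 2 * t) / 4))]
    ring_nf
  simp only [hγ]
  exact mul_lt_mul_of_pos_left hdec (by positivity)

/-- For `N > 2s` with `s ∈ (0,1)`, the map
`α ↦ γ_α = 2^{2s} Γ((N+2s+2α)/4)Γ((N+2s-2α)/4) / (Γ((N-2s-2α)/4)Γ((N-2s+2α)/4))`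
is strictly decreasing on `[0, (N-2s)/2)`. -/
theorem gamma_alpha_strictAntiOn (s N : ℝ) (hs : s ∈ Set.Ioo (0:ℝ) 1) (hN : 2 * s < N) :
    StrictAntiOn (fun α : ℝ =>
      2 ^ (2 * s) *
        (Real.Gamma ((N + 2 * s + 2 * α) / 4) * Real.Gamma ((N + 2 * s - 2 * α) / 4)) /
        (Real.Gamma ((N - 2 * s - 2 * α) / 4) * Real.Gamma ((N - 2 * s + 2 * α) / 4)))
      (Set.Ico (0:ℝ) ((N - 2 * s) / 2)) :=
  gamma_alpha_strictAntiOn_general s N hs
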